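/- arXiv:1701.01340 — 2 statements merged into one kernel-verified Lean document; each statement's English description precedes it below -/
import Mathlib

section
/- Let X = (X_1,…,X_d) be a random vector with joint distribution function F_X(t) = exp(−(Σ_{i=1}^d σ_i^{η/α} t_i^{−1/α})^{α/η}) for t ∈ (0,∞)^d (the logistic model). Then X satisfies conditions (i) and (ii), and for any partition of I = {1,…,d} into nonempty blocks I_1,…,I_p: ε(1,…,1) = d^{α/η} and ε_{I_j}(1) = |I_j|^{α/η} for every j. -/
open MeasureTheory ProbabilityTheory Real Filter Topology
open scoped ProbabilityTheory

noncomputable section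

/-- Marginal Fréchet-type distribution function `F_i(t) = exp(-σ t^(-1/η))` for `t > 0`. -/
def margF (σ η t : ℝ) : ℝ := if 0 < t then Real.exp (-σ * t ^ (-1 / η)) else 0

/-- Joint distribution function of the random vector `X`. -/
def jointF {Ω : Type*} [MeasureSpace Ω] {d : ℕ} (X : Fin d → Ω → ℝ) (t : Fin d → ℝ) : ℝ :=
  (ℙ {ω | ∀ i, X i ω ≤ t i}).toReal

/-- Exponent function `ℓ(t) = -ln F_X(t)`. -/
def expo {Ω : Type*} [MeasureSpace Ω] {d : ℕ} (X : Fin d → Ω → ℝ) (t : Fin d → ℝ) : ℝ :=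
  -Real.log (jointF X t)

/-- Block maximum `M(I_j) = max_{i ∈ I_j} F_i(X_i)`, where `I_j = {i | B i = j}`. -/
def blockMax {Ω : Type*} [MeasureSpace Ω] {d p : ℕ} (B : Fin d → Fin p) (σ : Fin d → ℝ)
    (η : ℝ) (X : Fin d → Ω → ℝ) (j : Fin p) (ω : Ω) : ℝ :=
  sSup ((fun i => margF (σ i) η (X i ω)) '' {i | B i = j})

/-- Extremal dependence function
`ε(λ₁,…,λ_p) = E(max_j M(I_j)^(λ_j)) / (1 - E(max_j M(I_j)^(λ_j)))`. -/
def epsFun {Ω : Type*} [MeasureSpace Ω] {d p : ℕ} (B : Fin d → Fin p) (σ : Fin d → ℝ)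
    (η : ℝ) (X : Fin d → Ω → ℝ) (l : Fin p → ℝ) : ℝ :=
  (∫ ω, ⨆ j, blockMax B σ η X j ω ^ l j ∂ℙ) /
    (1 - ∫ ω, ⨆ j, blockMax B σ η X j ω ^ l j ∂ℙ)

/-- Single-block extremal dependence function `ε_{I_j}(λ)`. -/
def epsBlock {Ω : Type*} [MeasureSpace Ω] {d p : ℕ} (B : Fin d → Fin p) (σ : Fin d → ℝ)
    (η : ℝ) (X : Fin d → Ω → ℝ) (j : Fin p) (l : ℝ) : ℝ :=
  (∫ ω, blockMax B σ η X j ω ^ l ∂ℙ) / (1 - ∫ ω, blockMax B σ η X j ω ^ l ∂ℙ)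

/-!
Write `q_i(u) = (σ_i / (-log u))^η`, so that `F_i(x) ≤ u ↔ x ≤ q_i(u)` for `0 < u < 1`. Sending the
coordinates outside a set `S` to `+∞` in the logistic formula gives the joint law of `(X_i)_{i ∈ S}`,
and at `t = q(u)` every summand becomes `(-log u)^{η/α}`, so that
`P(max_{i ∈ S} F_i(X_i) ≤ u) = u^c` with `c = |S|^{α/η}`. Hence
`E(max_{i ∈ S} F_i(X_i)) = ∫₀¹ (1 - u^c) du = c / (c + 1)`, whose odds `E / (1 - E)` are `c`.
-/

def logisticExpo {ι : Type*} (S : Finset ι) (σ : ι → ℝ) (α η : ℝ) (t : ι → ℝ) : ℝ :=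
  (∑ i ∈ S, σ i ^ (η / α) * t i ^ (-1 / α)) ^ (α / η)

def HasLogisticCDF {Ω ι : Type*} [MeasurableSpace Ω] [Fintype ι] (μ : Measure Ω)
    (X : ι → Ω → ℝ) (σ : ι → ℝ) (α η : ℝ) : Prop :=
  ∀ t : ι → ℝ, (∀ i, 0 < t i) →
    μ {ω | ∀ i, X i ω ≤ t i} = ENNReal.ofReal (exp (-logisticExpo Finset.univ σ α η t))

/-- `max_{i ∈ s} F_i(X_i(ω))`, read as `0` when `s` is empty. -/
def maxMargF {Ω ι : Type*} (σ : ι → ℝ) (η : ℝ) (X : ι → Ω → ℝ) (s : Set ι) (ω : Ω) : ℝ :=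
  sSup ((fun i => margF (σ i) η (X i ω)) '' s)

lemma div_add_one_div_one_sub {c : ℝ} (hc : c + 1 ≠ 0) : c / (c + 1) / (1 - c / (c + 1)) = c := by
  rw [one_sub_div hc, add_sub_cancel_left, div_div_div_cancel_right₀ hc, div_one]

section margF

variable {σ η : ℝ}

lemma margF_nonneg (σ η t : ℝ) : 0 ≤ margF σ η t := by
  unfold margF; split <;> positivity

lemma margF_le_one (hσ : 0 ≤ σ) (t : ℝ) : margF σ η t ≤ 1 := by
  unfold margF; split
  · rw [exp_le_one_iff, neg_mul, neg_nonpos]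
    positivity
  · exact zero_le_one

lemma measurable_margF (σ η : ℝ) : Measurable (margF σ η) :=
  Measurable.ite measurableSet_Ioi (by fun_prop) measurable_const

lemma margF_le_iff (hσ : 0 < σ) (hη : 0 < η) {u : ℝ} (hu0 : 0 < u) (hu1 : u < 1) (t : ℝ) :
    margF σ η t ≤ u ↔ t ≤ (σ / -log u) ^ η := by
  have hs : 0 < -log u := neg_pos.2 (log_neg hu0 hu1)
  have hq : 0 < (σ / -log u) ^ η := by positivity
  unfold margF
  split_ifs with ht
  · have hquantile : ((σ / -log u) ^ η) ^ (-1 / η) = -log u / σ := by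
      rw [← rpow_mul (by positivity), mul_div_cancel₀ _ hη.ne', rpow_neg_one, inv_div]
    have hexp : -1 / η < 0 := div_neg_of_neg_of_pos neg_one_lt_zero hη
    rw [← rpow_le_rpow_iff_of_neg hq ht hexp, hquantile, ← le_log_iff_exp_le hu0,
      div_le_iff₀ hσ]
    constructor <;> intro h <;> linarith
  · exact iff_of_true hu0.le ((not_lt.1 ht).trans hq.le)

end margF

section logisticExpo

variable {ι : Type*} {S : Finset ι} {σ : ι → ℝ} {α η : ℝ}

lemma logisticExpo_singleton (i : ι) (hσ : 0 ≤ σ i) {t : ι → ℝ} (ht : 0 ≤ t i) (hα : α ≠ 0)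
    (hη : η ≠ 0) : logisticExpo {i} σ α η t = σ i * t i ^ (-1 / η) := by
  rw [logisticExpo, Finset.sum_singleton, mul_rpow (by positivity) (by positivity),
    ← rpow_mul hσ, ← rpow_mul ht, div_mul_div_cancel₀ hα, div_self hη, rpow_one,
    div_mul_div_cancel₀ hα]

lemma logisticExpo_const_mul (hσ : ∀ i ∈ S, 0 ≤ σ i) {t : ι → ℝ} (ht : ∀ i ∈ S, 0 ≤ t i)
    {c : ℝ} (hc : 0 ≤ c) (hα : α ≠ 0) :
    logisticExpo S σ α η (fun i => c * t i) = c ^ (-1 / η) * logisticExpo S σ α η t := by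
  have hsum : ∑ i ∈ S, σ i ^ (η / α) * (c * t i) ^ (-1 / α)
      = c ^ (-1 / α) * ∑ i ∈ S, σ i ^ (η / α) * t i ^ (-1 / α) := by
    rw [Finset.mul_sum]
    refine Finset.sum_congr rfl fun i hi => ?_
    rw [mul_rpow hc (ht i hi)]
    ring
  have hnonneg : 0 ≤ ∑ i ∈ S, σ i ^ (η / α) * t i ^ (-1 / α) :=
    Finset.sum_nonneg fun i hi => by have := hσ i hi; have := ht i hi; positivity
  rw [logisticExpo, logisticExpo, hsum, mul_rpow (by positivity) hnonneg, ← rpow_mul hc,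
    div_mul_div_cancel₀ hα]

lemma logisticExpo_quantile (hσ : ∀ i ∈ S, 0 < σ i) {s : ℝ} (hs : 0 < s) (hα : α ≠ 0)
    (hη : η ≠ 0) :
    logisticExpo S σ α η (fun i => (σ i / s) ^ η) = (S.card : ℝ) ^ (α / η) * s := by
  have hterm : ∀ i ∈ S, σ i ^ (η / α) * ((σ i / s) ^ η) ^ (-1 / α) = s ^ (η / α) := by
    intro i hi
    have hσi := hσ i hi
    have hexp : η * (-1 / α) = -(η / α) := by ring
    rw [← rpow_mul (by positivity), hexp, div_rpow hσi.le hs.le, rpow_neg hσi.le,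
      rpow_neg hs.le, div_inv_eq_mul, mul_inv_cancel_left₀ (by positivity)]
  rw [logisticExpo, Finset.sum_congr rfl hterm, Finset.sum_const, nsmul_eq_mul,
    mul_rpow (Nat.cast_nonneg _) (by positivity), ← rpow_mul hs.le, div_mul_div_cancel₀ hα,
    div_self hη, rpow_one]

lemma tendsto_logisticExpo_piecewise [Fintype ι] [DecidableEq ι] (hα : 0 < α) (hη : 0 < η)
    (t : ι → ℝ) :
    Tendsto (fun n : ℕ => logisticExpo Finset.univ σ α η (S.piecewise t fun _ => (n : ℝ) + 1))
      atTop (𝓝 (logisticExpo S σ α η t)) := by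
  have hpow : Tendsto (fun n : ℕ => ((n : ℝ) + 1) ^ (-1 / α)) atTop (𝓝 0) := by
    rw [neg_div]
    exact (tendsto_rpow_neg_atTop (by positivity)).comp
      (tendsto_atTop_add_const_right _ _ tendsto_natCast_atTop_atTop)
  have hterm : ∀ i, Tendsto
      (fun n : ℕ => σ i ^ (η / α) * (S.piecewise t (fun _ => (n : ℝ) + 1) i) ^ (-1 / α)) atTop
      (𝓝 (if i ∈ S then σ i ^ (η / α) * t i ^ (-1 / α) else 0)) := by
    intro i
    by_cases hi : i ∈ S
    · simp only [Finset.piecewise_eq_of_mem _ _ _ hi, if_pos hi, tendsto_const_nhds]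
    · simpa only [Finset.piecewise_eq_of_notMem _ _ _ hi, if_neg hi, mul_zero] using
        hpow.const_mul (σ i ^ (η / α))
  have hsum := tendsto_finsetSum Finset.univ fun i _ => hterm i
  rw [Finset.sum_ite_mem, Finset.univ_inter] at hsum
  exact (continuousAt_rpow_const _ _ (Or.inr (div_pos hα hη).le)).tendsto.comp hsum

end logisticExpo

section measure

variable {Ω ι : Type*} [MeasurableSpace Ω] {μ : Measure Ω} {X : ι → Ω → ℝ} {σ : ι → ℝ}
  {α η : ℝ}

lemma tendsto_measure_forall_le_piecewise [Finite ι] [DecidableEq ι] (S : Finset ι)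
    (t : ι → ℝ) :
    Tendsto (fun n : ℕ => μ {ω | ∀ i, X i ω ≤ S.piecewise t (fun _ => (n : ℝ) + 1) i}) atTop
      (𝓝 (μ {ω | ∀ i ∈ S, X i ω ≤ t i})) := by
  have hmono : Monotone fun n : ℕ =>
      {ω | ∀ i, X i ω ≤ S.piecewise t (fun _ => (n : ℝ) + 1) i} := by
    intro m n hmn ω hω i
    refine (hω i).trans ?_
    by_cases hi : i ∈ S
    · simp [hi]
    · simpa [hi] using hmn
  have hunion : ⋃ n : ℕ, {ω | ∀ i, X i ω ≤ S.piecewise t (fun _ => (n : ℝ) + 1) i}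
      = {ω | ∀ i ∈ S, X i ω ≤ t i} := by
    ext ω
    simp only [Set.mem_iUnion, Set.mem_ofPred_eq]
    constructor
    · rintro ⟨n, hn⟩ i hi
      simpa [hi] using hn i
    · intro h
      have hlarge : ∀ᶠ n : ℕ in atTop, ∀ i, X i ω ≤ (n : ℝ) + 1 :=
        eventually_all.2 fun i => (tendsto_natCast_atTop_atTop.eventually_ge_atTop (X i ω)).mono
          fun n hn => by linarith
      obtain ⟨n, hn⟩ := hlarge.exists
      refine ⟨n, fun i => ?_⟩
      by_cases hi : i ∈ S
      · simpa [hi] using h i hi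
      · simpa [hi] using hn i
  rw [← hunion]
  exact tendsto_measure_iUnion_atTop hmono

lemma measure_forall_le_of_hasLogisticCDF [Fintype ι] (h : HasLogisticCDF μ X σ α η)
    (hα : 0 < α) (hη : 0 < η) (S : Finset ι) {t : ι → ℝ} (ht : ∀ i ∈ S, 0 < t i) :
    μ {ω | ∀ i ∈ S, X i ω ≤ t i} = ENNReal.ofReal (exp (-logisticExpo S σ α η t)) := by
  classical
  have hpos : ∀ n : ℕ, ∀ i, 0 < S.piecewise t (fun _ => (n : ℝ) + 1) i := by
    intro n i
    by_cases hi : i ∈ S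
    · simpa [hi] using ht i hi
    · simp only [Finset.piecewise_eq_of_notMem _ _ _ hi]
      positivity
  refine tendsto_nhds_unique (tendsto_measure_forall_le_piecewise S t) ?_
  simp only [h _ (hpos _)]
  have hcont : Continuous fun x : ℝ => ENNReal.ofReal (exp (-x)) :=
    ENNReal.continuous_ofReal.comp (continuous_exp.comp continuous_neg)
  exact hcont.continuousAt.tendsto.comp (tendsto_logisticExpo_piecewise hα hη t)

end measure

section maxMargF

variable {Ω ι : Type*} {X : ι → Ω → ℝ} {σ : ι → ℝ} {η : ℝ} {s t : Set ι} {ω : Ω}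

lemma maxMargF_nonneg : 0 ≤ maxMargF σ η X s ω :=
  Real.sSup_nonneg (Set.forall_mem_image.2 fun _ _ => margF_nonneg _ _ _)

variable [Finite ι]

lemma maxMargF_le_iff {u : ℝ} (hu : 0 ≤ u) :
    maxMargF σ η X s ω ≤ u ↔ ∀ i ∈ s, margF (σ i) η (X i ω) ≤ u :=
  ⟨fun h _ hi => (le_csSup (s.toFinite.image _).bddAbove (Set.mem_image_of_mem _ hi)).trans h,
    fun h => Real.sSup_le (Set.forall_mem_image.2 h) hu⟩

lemma maxMargF_mono (hst : s ⊆ t) : maxMargF σ η X s ω ≤ maxMargF σ η X t ω :=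
  (maxMargF_le_iff maxMargF_nonneg).2 fun i hi =>
    (maxMargF_le_iff maxMargF_nonneg).1 le_rfl i (hst hi)

lemma maxMargF_le_one (hσ : ∀ i, 0 ≤ σ i) : maxMargF σ η X s ω ≤ 1 :=
  (maxMargF_le_iff zero_le_one).2 fun i _ => margF_le_one (hσ i) _

lemma measurable_maxMargF [MeasurableSpace Ω] (hX : ∀ i, Measurable (X i)) (s : Set ι) :
    Measurable (maxMargF σ η X s) := by
  have hiSup : maxMargF σ η X s = fun ω => ⨆ i : s, margF (σ i) η (X i ω) :=
    funext fun _ => sSup_image'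
  rw [hiSup]
  exact Measurable.iSup fun i => (measurable_margF _ _).comp (hX i)

end maxMargF

lemma integral_eq_div_add_one_of_measure_le_eq_rpow {Ω : Type*} [MeasurableSpace Ω]
    {μ : Measure Ω} [IsProbabilityMeasure μ] {M : Ω → ℝ} (hM : Measurable M)
    (hM0 : ∀ ω, 0 ≤ M ω) (hM1 : ∀ ω, M ω ≤ 1) {c : ℝ} (hc : 0 ≤ c)
    (hcdf : ∀ u ∈ Set.Ioo (0 : ℝ) 1, μ {ω | M ω ≤ u} = ENNReal.ofReal (u ^ c)) :
    ∫ ω, M ω ∂μ = c / (c + 1) := by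
  have hint : Integrable M μ :=
    (integrable_const (1 : ℝ)).mono' hM.aestronglyMeasurable
      (ae_of_all _ fun ω => by rw [norm_of_nonneg (hM0 ω)]; exact hM1 ω)
  have htail : ∀ t ∈ Set.Ioi (0 : ℝ),
      μ.real {ω | t < M ω} = (Set.Ioo 0 1).indicator (fun u => 1 - u ^ c) t := by
    intro t ht
    rw [measureReal_def]
    by_cases ht1 : t < 1
    · have hmem : t ∈ Set.Ioo (0 : ℝ) 1 := ⟨ht, ht1⟩
      have htc : t ^ c ≤ 1 := rpow_le_one (le_of_lt ht) ht1.le hc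
      have hcompl : {ω | t < M ω} = {ω | M ω ≤ t}ᶜ := by
        ext ω; simp
      rw [Set.indicator_of_mem hmem, hcompl,
        prob_compl_eq_one_sub (measurableSet_le hM measurable_const),
        hcdf t hmem, ENNReal.toReal_sub_of_le (by simpa using htc) ENNReal.one_ne_top,
        ENNReal.toReal_ofReal (rpow_nonneg (le_of_lt ht) c), ENNReal.toReal_one]
    · have hempty : {ω | t < M ω} = ∅ :=
        Set.eq_empty_of_forall_notMem fun ω hω => ht1 (lt_of_lt_of_le hω (hM1 ω))
      rw [Set.indicator_of_notMem fun h => ht1 h.2, hempty, measure_empty, ENNReal.toReal_zero]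
  rw [hint.integral_eq_integral_meas_lt (ae_of_all _ hM0),
    setIntegral_congr_fun measurableSet_Ioi htail, setIntegral_indicator measurableSet_Ioo,
    Set.Ioi_inter_Ioo, max_self, ← integral_Ioc_eq_integral_Ioo,
    ← intervalIntegral.integral_of_le zero_le_one,
    intervalIntegral.integral_sub intervalIntegrable_const
      (intervalIntegral.intervalIntegrable_rpow' (by linarith)),
    integral_rpow (Or.inl (by linarith))]
  have hc1 : c + 1 ≠ 0 := by positivity
  simp only [intervalIntegral.integral_const, one_rpow, zero_rpow hc1, smul_eq_mul]
  field_simp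
  ring

section logisticMax

variable {Ω ι : Type*} [MeasurableSpace Ω] [Fintype ι] {μ : Measure Ω} {X : ι → Ω → ℝ}
  {σ : ι → ℝ} {α η : ℝ}

lemma measure_maxMargF_le (h : HasLogisticCDF μ X σ α η) (hσ : ∀ i, 0 < σ i) (hα : 0 < α)
    (hη : 0 < η) (S : Finset ι) {u : ℝ} (hu0 : 0 < u) (hu1 : u < 1) :
    μ {ω | maxMargF σ η X S ω ≤ u} = ENNReal.ofReal (u ^ ((S.card : ℝ) ^ (α / η))) := by
  have hs : 0 < -log u := neg_pos.2 (log_neg hu0 hu1)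
  have hevent : {ω | maxMargF σ η X S ω ≤ u} = {ω | ∀ i ∈ S, X i ω ≤ (σ i / -log u) ^ η} := by
    ext ω
    simp only [Set.mem_ofPred_eq, maxMargF_le_iff hu0.le, Finset.mem_coe]
    exact forall₂_congr fun i _ => margF_le_iff (hσ i) hη hu0 hu1 _
  rw [hevent, measure_forall_le_of_hasLogisticCDF h hα hη S fun i _ => by have := hσ i; positivity,
    logisticExpo_quantile (fun i _ => hσ i) hs hα.ne' hη.ne', rpow_def_of_pos hu0]
  ring_nf

lemma integral_maxMargF [IsProbabilityMeasure μ] (h : HasLogisticCDF μ X σ α η)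
    (hX : ∀ i, Measurable (X i)) (hσ : ∀ i, 0 < σ i) (hα : 0 < α) (hη : 0 < η) (S : Finset ι) :
    ∫ ω, maxMargF σ η X S ω ∂μ = (S.card : ℝ) ^ (α / η) / ((S.card : ℝ) ^ (α / η) + 1) :=
  integral_eq_div_add_one_of_measure_le_eq_rpow (measurable_maxMargF hX _)
    (fun _ => maxMargF_nonneg) (fun _ => maxMargF_le_one fun i => (hσ i).le) (by positivity)
    fun _ hu => measure_maxMargF_le h hσ hα hη S hu.1 hu.2

end logisticMax

section blocks

variable {Ω : Type*} [MeasureSpace Ω] {d p : ℕ} {B : Fin d → Fin p} {σ : Fin d → ℝ} {η : ℝ}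
  {X : Fin d → Ω → ℝ}

lemma blockMax_eq_maxMargF (j : Fin p) :
    blockMax B σ η X j = maxMargF σ η X ↑(Finset.univ.filter fun i => B i = j) := by
  ext ω
  simp [blockMax, maxMargF]

lemma iSup_blockMax_eq_maxMargF (ω : Ω) :
    ⨆ j, blockMax B σ η X j ω = maxMargF σ η X Set.univ ω := by
  refine le_antisymm (Real.iSup_le (fun j => maxMargF_mono (Set.subset_univ _)) maxMargF_nonneg)
    ((maxMargF_le_iff (Real.iSup_nonneg fun _ => maxMargF_nonneg)).2 fun i _ => ?_)
  have hblock : margF (σ i) η (X i ω) ≤ blockMax B σ η X (B i) ω :=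
    (maxMargF_le_iff maxMargF_nonneg).1 le_rfl i rfl
  exact hblock.trans
    (le_ciSup (f := fun j => blockMax B σ η X j ω) (Set.finite_range _).bddAbove (B i))

end blocks

lemma expo_eq_logisticExpo {Ω : Type*} [MeasureSpace Ω] {d : ℕ} {X : Fin d → Ω → ℝ}
    {σ : Fin d → ℝ} {α η : ℝ} (h : HasLogisticCDF ℙ X σ α η) {t : Fin d → ℝ}
    (ht : ∀ i, 0 < t i) : expo X t = logisticExpo Finset.univ σ α η t := by
  rw [expo, jointF, h t ht, ENNReal.toReal_ofReal (exp_nonneg _), log_exp, neg_neg]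

theorem statement13_general
    {Ω : Type*} [MeasureSpace Ω] [IsProbabilityMeasure (ℙ : Measure Ω)]
    {d p : ℕ}
    (X : Fin d → Ω → ℝ) (hX : ∀ i, Measurable (X i))
    (σ : Fin d → ℝ) (hσ : ∀ i, 0 < σ i)
    (α η : ℝ) (hα : 0 < α) (hαη : α ≤ η)
    (hjoint : ∀ t : Fin d → ℝ, (∀ i, 0 < t i) →
      ℙ {ω | ∀ i, X i ω ≤ t i} =
        ENNReal.ofReal (Real.exp (-((∑ i, σ i ^ (η / α) * t i ^ (-1 / α)) ^ (α / η)))))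
    (B : Fin d → Fin p) :
    ((∀ i, ∀ t : ℝ, 0 < t →
        ℙ {ω | X i ω ≤ t} = ENNReal.ofReal (Real.exp (-σ i * t ^ (-1 / η)))) ∧
      (∀ t : Fin d → ℝ, (∀ i, 0 < t i) → 0 < jointF X t) ∧
      (∀ c : ℝ, 0 < c → ∀ t : Fin d → ℝ, (∀ i, 0 < t i) →
        expo X (fun i => c * t i) = c ^ (-1 / η) * expo X t)) ∧
    epsFun B σ η X (fun _ => 1) = (d : ℝ) ^ (α / η) ∧
    ∀ j, epsBlock B σ η X j 1 =
      ((Finset.univ.filter fun i => B i = j).card : ℝ) ^ (α / η) := by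
  have hη : 0 < η := hα.trans_le hαη
  have hlog : HasLogisticCDF ℙ X σ α η := hjoint
  refine ⟨⟨fun i t ht => ?_, fun t ht => ?_, fun c hc t ht => ?_⟩, ?_, fun j => ?_⟩
  · have hi := measure_forall_le_of_hasLogisticCDF hlog hα hη {i} (t := fun _ => t) (by simpa)
    rw [logisticExpo_singleton i (hσ i).le ht.le hα.ne' hη.ne', ← neg_mul] at hi
    simpa using hi
  · rw [jointF, hjoint t ht, ENNReal.toReal_ofReal (exp_nonneg _)]
    exact exp_pos _
  · rw [expo_eq_logisticExpo hlog fun i => mul_pos hc (ht i), expo_eq_logisticExpo hlog ht,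
      logisticExpo_const_mul (fun i _ => (hσ i).le) (fun i _ => (ht i).le) hc.le hα.ne']
  · simp only [epsFun, rpow_one, iSup_blockMax_eq_maxMargF, ← Finset.coe_univ,
      integral_maxMargF hlog hX hσ hα hη, Finset.card_univ, Fintype.card_fin]
    exact div_add_one_div_one_sub (by positivity)
  · simp only [epsBlock, rpow_one, blockMax_eq_maxMargF, integral_maxMargF hlog hX hσ hα hη]
    exact div_add_one_div_one_sub (by positivity)

theorem statement13
    {Ω : Type*} [MeasureSpace Ω] [IsProbabilityMeasure (ℙ : Measure Ω)]
    {d p : ℕ} (hd : 0 < d) (hp : 0 < p)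
    (X : Fin d → Ω → ℝ) (hX : ∀ i, Measurable (X i))
    (σ : Fin d → ℝ) (hσ : ∀ i, 0 < σ i)
    (α η : ℝ) (hα : 0 < α) (hαη : α ≤ η) (hη1 : η ≤ 1)
    (hjoint : ∀ t : Fin d → ℝ, (∀ i, 0 < t i) →
      ℙ {ω | ∀ i, X i ω ≤ t i} =
        ENNReal.ofReal (Real.exp (-((∑ i, σ i ^ (η / α) * t i ^ (-1 / α)) ^ (α / η)))))
    (B : Fin d → Fin p) (hB : Function.Surjective B) :
    ((∀ i, ∀ t : ℝ, 0 < t →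
        ℙ {ω | X i ω ≤ t} = ENNReal.ofReal (Real.exp (-σ i * t ^ (-1 / η)))) ∧
      (∀ t : Fin d → ℝ, (∀ i, 0 < t i) → 0 < jointF X t) ∧
      (∀ c : ℝ, 0 < c → ∀ t : Fin d → ℝ, (∀ i, 0 < t i) →
        expo X (fun i => c * t i) = c ^ (-1 / η) * expo X t)) ∧
    epsFun B σ η X (fun _ => 1) = (d : ℝ) ^ (α / η) ∧
    ∀ j, epsBlock B σ η X j 1 =
      ((Finset.univ.filter fun i => B i = j).card : ℝ) ^ (α / η) :=
  statement13_general X hX σ hσ α η hα hαη hjoint B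
end
end

section
/- Let X = (X_1,…,X_d) be a random vector with joint distribution function F_X(t) = exp(−(Σ_{i=1}^d σ_i^{η/α} t_i^{−1/α})^{α/η}) for t ∈ (0,∞)^d (the logistic model), and let I = {1,…,d} be partitioned into two nonempty blocks I_1, I_2. Then the tail dependence coefficient of (X_{I_1}, X_{I_2}) equals lim_{t→∞} t · P(M(I_1) > 1 − 1/t, M(I_2) > 1 − 1/t) = |I_1|^{α/η} + |I_2|^{α/η} − (|I_1| + |I_2|)^{α/η}. -/
/-!
For `u ∈ (0, 1)` the event `M(I_j) ≤ u` is the box on which every `X_i`, `i ∈ I_j`, lies below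
the `u`-quantile `(σ_i / -log u)^η` of its marginal. Letting the other coordinates of the
logistic distribution function tend to infinity, a box over `S ⊆ I` has probability
`u ^ (|S| ^ (α/η))`, and `{M(I_1) ≤ u} ∩ {M(I_2) ≤ u}` is the box over `I_1 ∪ I_2`. By
inclusion–exclusion, with `u = 1 - 1/t`, the quantity `t · P(M(I_1) > u, M(I_2) > u)` is a signed
sum of terms `t (1 - u^c)`, each of which tends to `c`, the derivative of `x ↦ 1 - (1 - x)^c` at 0.
-/

open MeasureTheory ProbabilityTheory Real Filter Topology
open scoped ProbabilityTheory

noncomputable section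

def margQuantile (σ η u : ℝ) : ℝ := (σ / -Real.log u) ^ η

def logisticCDF {ι : Type*} [Fintype ι] (σ : ι → ℝ) (α η : ℝ) (t : ι → ℝ) : ℝ :=
  Real.exp (-((∑ i, σ i ^ (η / α) * t i ^ (-1 / α)) ^ (α / η)))

section Marginal

variable {σ η u : ℝ}

lemma neg_log_pos (hu0 : 0 < u) (hu1 : u < 1) : 0 < -Real.log u :=
  neg_pos.2 (Real.log_neg hu0 hu1)

lemma margQuantile_pos (hσ : 0 < σ) (hu0 : 0 < u) (hu1 : u < 1) : 0 < margQuantile σ η u :=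
  Real.rpow_pos_of_pos (div_pos hσ (neg_log_pos hu0 hu1)) η

lemma margF_le_iff_le_margQuantile (hσ : 0 < σ) (hη : 0 < η) (hu0 : 0 < u) (hu1 : u < 1)
    (t : ℝ) : margF σ η t ≤ u ↔ t ≤ margQuantile σ η u := by
  have hL := neg_log_pos hu0 hu1
  have hq : 0 < σ / -Real.log u := div_pos hσ hL
  unfold margF margQuantile
  split_ifs with ht
  · have htη : 0 < t ^ (1 / η) := Real.rpow_pos_of_pos ht _
    calc Real.exp (-σ * t ^ (-1 / η)) ≤ u
        ↔ -Real.log u / σ ≤ (t ^ (1 / η))⁻¹ := by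
          rw [← Real.le_log_iff_exp_le hu0, div_le_iff₀ hσ, neg_div,
            Real.rpow_neg ht.le]
          constructor <;> intro h <;> linarith
      _ ↔ t ^ (1 / η) ≤ σ / -Real.log u := by rw [le_inv_comm₀ (div_pos hL hσ) htη, inv_div]
      _ ↔ t ≤ (σ / -Real.log u) ^ η := by
          rw [← Real.rpow_le_rpow_iff htη.le hq.le hη, ← Real.rpow_mul ht.le,
            one_div_mul_cancel hη.ne', Real.rpow_one]
  · exact iff_of_true hu0.le ((not_lt.1 ht).trans (Real.rpow_pos_of_pos hq η).le)

lemma rpow_mul_margQuantile_rpow (α : ℝ) (hσ : 0 < σ) (hu0 : 0 < u) (hu1 : u < 1) :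
    σ ^ (η / α) * margQuantile σ η u ^ (-1 / α) = (-Real.log u) ^ (η / α) := by
  have hL := neg_log_pos hu0 hu1
  rw [margQuantile, ← Real.rpow_mul (div_pos hσ hL).le, Real.div_rpow hσ.le hL.le,
    show η * (-1 / α) = -(η / α) by ring, Real.rpow_neg (by positivity),
    Real.rpow_neg hL.le, inv_div_inv, mul_div_cancel₀ _ (Real.rpow_pos_of_pos hσ _).ne']

end Marginal

lemma blockMax_le_iff {Ω : Type*} [MeasureSpace Ω] {d p : ℕ} (B : Fin d → Fin p)
    (σ : Fin d → ℝ) (η : ℝ) (X : Fin d → Ω → ℝ) (j : Fin p) (ω : Ω) {u : ℝ} (hu : 0 ≤ u) :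
    blockMax B σ η X j ω ≤ u ↔ ∀ i, B i = j → margF (σ i) η (X i ω) ≤ u := by
  refine ⟨fun h i hi => (le_csSup (Set.toFinite _).bddAbove (Set.mem_image_of_mem (fun i => margF (σ i) η (X i ω)) hi)).trans h,
    fun h => Real.sSup_le ?_ hu⟩
  rintro _ ⟨i, hi, rfl⟩
  exact h i hi

lemma tendsto_mul_one_sub_one_sub_inv_rpow (c : ℝ) :
    Tendsto (fun t : ℝ => t * (1 - (1 - 1 / t) ^ c)) atTop (𝓝 c) := by
  have hderiv : HasDerivAt (fun x : ℝ => (1 - x) ^ c) (-c) 0 := by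
    simpa [Function.comp_def] using (Real.hasDerivAt_rpow_const (x := 1 - 0) (p := c) (Or.inl (by norm_num))).comp 0
      ((hasDerivAt_id 0).const_sub 1)
  have hinv : Tendsto (fun t : ℝ => 1 / t) atTop (𝓝[≠] 0) := by
    simpa only [one_div] using tendsto_inv_atTop_nhdsGT_zero.mono_right (nhdsGT_le_nhdsNE 0)
  have hslope := ((hasDerivAt_iff_tendsto_slope.1 hderiv).comp hinv).neg
  rw [neg_neg] at hslope
  refine hslope.congr' ?_
  filter_upwards [eventually_gt_atTop 0] with t ht
  simp only [Function.comp_apply, slope_def_field, sub_zero, Real.one_rpow]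
  field_simp
  ring

section Box

variable {Ω ι : Type*} [MeasurableSpace Ω]

lemma measurableSet_setOf_forall_mem_le {X : ι → Ω → ℝ} (hX : ∀ i, Measurable (X i))
    (S : Finset ι) (s : ι → ℝ) : MeasurableSet {ω | ∀ i ∈ S, X i ω ≤ s i} := by
  have hbox : {ω | ∀ i ∈ S, X i ω ≤ s i} = ⋂ i ∈ S, {ω | X i ω ≤ s i} := by
    ext ω
    simp only [Set.mem_iInter, Set.mem_ofPred_eq]
  rw [hbox]
  exact S.measurableSet_biInter fun i _ => measurableSet_le (hX i) measurable_const

variable [Fintype ι] [DecidableEq ι]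

lemma tendsto_measure_setOf_forall_le_ite (μ : Measure Ω) (X : ι → Ω → ℝ) (S : Finset ι)
    (s : ι → ℝ) :
    Tendsto (fun n : ℕ => μ {ω | ∀ i, X i ω ≤ if i ∈ S then s i else n + 1}) atTop
      (𝓝 (μ {ω | ∀ i ∈ S, X i ω ≤ s i})) := by
  have hmono : Monotone fun n : ℕ => {ω | ∀ i, X i ω ≤ if i ∈ S then s i else n + 1} := by
    intro m n hmn ω hω i
    have hcast : (m : ℝ) ≤ n := Nat.cast_le.2 hmn
    have := hω i
    split_ifs at this ⊢ <;> linarith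
  have hunion : ⋃ n : ℕ, {ω | ∀ i, X i ω ≤ if i ∈ S then s i else n + 1}
      = {ω | ∀ i ∈ S, X i ω ≤ s i} := by
    ext ω
    simp only [Set.mem_iUnion, Set.mem_ofPred_eq]
    constructor
    · rintro ⟨n, hn⟩ i hi
      simpa [hi] using hn i
    · intro h
      obtain ⟨n, hn⟩ := (eventually_all.2 fun i =>
        tendsto_natCast_atTop_atTop.eventually_ge_atTop (X i ω)).exists
      refine ⟨n, fun i => ?_⟩
      split_ifs with hi
      exacts [h i hi, (hn i).trans (le_add_of_nonneg_right zero_le_one)]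
  rw [← hunion]
  exact tendsto_measure_iUnion_atTop hmono

lemma measure_setOf_forall_mem_le_margQuantile {μ : Measure Ω} {X : ι → Ω → ℝ}
    {σ : ι → ℝ} (hσ : ∀ i, 0 < σ i) {α η : ℝ} (hα : 0 < α) (hη : 0 < η)
    (hjoint : ∀ t : ι → ℝ, (∀ i, 0 < t i) →
      μ {ω | ∀ i, X i ω ≤ t i} = ENNReal.ofReal (logisticCDF σ α η t))
    (S : Finset ι) {u : ℝ} (hu0 : 0 < u) (hu1 : u < 1) :
    μ {ω | ∀ i ∈ S, X i ω ≤ margQuantile (σ i) η u}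
      = ENNReal.ofReal (u ^ ((S.card : ℝ) ^ (α / η))) := by
  set L := -Real.log u
  set T : ℕ → ι → ℝ := fun n i => if i ∈ S then margQuantile (σ i) η u else n + 1
  have hT : ∀ n i, 0 < T n i := fun n i => by
    simp only [T]; split_ifs
    exacts [margQuantile_pos (hσ i) hu0 hu1, by positivity]
  have hterm : ∀ i, Tendsto (fun n : ℕ => σ i ^ (η / α) * T n i ^ (-1 / α)) atTop
      (𝓝 (if i ∈ S then L ^ (η / α) else 0)) := fun i => by
    by_cases hi : i ∈ S
    · simp only [T, hi, if_true, rpow_mul_margQuantile_rpow α (hσ i) hu0 hu1]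
      exact tendsto_const_nhds
    · have hdecay := (tendsto_rpow_neg_atTop (one_div_pos.2 hα)).comp
        (tendsto_atTop_add_const_right atTop 1 tendsto_natCast_atTop_atTop)
      simpa [T, hi, neg_div] using hdecay.const_mul (σ i ^ (η / α))
  have hsum := tendsto_finsetSum Finset.univ fun i _ => hterm i
  rw [Finset.sum_ite_mem, Finset.univ_inter, Finset.sum_const, nsmul_eq_mul] at hsum
  have hcont : Continuous fun x : ℝ => ENNReal.ofReal (Real.exp (-(x ^ (α / η)))) :=
    ENNReal.continuous_ofReal.comp
      (Real.continuous_exp.comp (Real.continuous_rpow_const (by positivity)).neg)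
  have hlim := (hcont.tendsto _).comp hsum
  rw [tendsto_nhds_unique ((tendsto_measure_setOf_forall_le_ite μ X S _).congr
    fun n => hjoint _ (hT n)) hlim, Real.mul_rpow (Nat.cast_nonneg _) (Real.rpow_pos_of_pos (neg_log_pos hu0 hu1) _).le,
    ← Real.rpow_mul (neg_log_pos hu0 hu1).le, show η / α * (α / η) = 1 by field_simp,
    Real.rpow_one, Real.rpow_def_of_pos hu0]
  ring_nf

end Box

lemma measureReal_compl_inter_compl {Ω : Type*} [MeasurableSpace Ω] {μ : Measure Ω}
    [IsProbabilityMeasure μ] {A B : Set Ω} (hA : MeasurableSet A) (hB : MeasurableSet B) :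
    μ.real (Aᶜ ∩ Bᶜ) = (1 - μ.real A) + (1 - μ.real B) - (1 - μ.real (A ∩ B)) := by
  rw [← Set.compl_union, probReal_compl_eq_one_sub (hA.union hB)]
  linarith [measureReal_union_add_inter (μ := μ) (s := A) hB]

theorem statement14_general
    {Ω : Type*} [MeasureSpace Ω] [IsProbabilityMeasure (ℙ : Measure Ω)]
    {d : ℕ}
    (X : Fin d → Ω → ℝ) (hX : ∀ i, Measurable (X i))
    (σ : Fin d → ℝ) (hσ : ∀ i, 0 < σ i)
    (α η : ℝ) (hα : 0 < α) (hαη : α ≤ η)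
    (hjoint : ∀ t : Fin d → ℝ, (∀ i, 0 < t i) →
      ℙ {ω | ∀ i, X i ω ≤ t i} =
        ENNReal.ofReal (Real.exp (-((∑ i, σ i ^ (η / α) * t i ^ (-1 / α)) ^ (α / η)))))
    (B : Fin d → Fin 2) :
    Tendsto (fun t : ℝ => t * (ℙ {ω | 1 - 1 / t < blockMax B σ η X 0 ω ∧
        1 - 1 / t < blockMax B σ η X 1 ω}).toReal) atTop
      (𝓝 (((Finset.univ.filter fun i => B i = 0).card : ℝ) ^ (α / η)
          + ((Finset.univ.filter fun i => B i = 1).card : ℝ) ^ (α / η)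
          - (((Finset.univ.filter fun i => B i = 0).card : ℝ)
            + ((Finset.univ.filter fun i => B i = 1).card : ℝ)) ^ (α / η))) := by
  have hη : 0 < η := hα.trans_le hαη
  set I₀ := Finset.univ.filter fun i => B i = 0
  set I₁ := Finset.univ.filter fun i => B i = 1
  let box (u : ℝ) (S : Finset (Fin d)) : Set Ω :=
    {ω | ∀ i ∈ S, X i ω ≤ margQuantile (σ i) η u}
  have hbox : ∀ u, 0 < u → u < 1 → ∀ S, (ℙ : Measure Ω).real (box u S) = u ^ ((S.card : ℝ) ^ (α / η)) :=
    fun u hu0 hu1 S => by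
      rw [measureReal_def, measure_setOf_forall_mem_le_margQuantile hσ hα hη hjoint S hu0 hu1,
        ENNReal.toReal_ofReal (Real.rpow_nonneg hu0.le _)]
  have hevent : ∀ u, 0 < u → u < 1 →
      {ω | u < blockMax B σ η X 0 ω ∧ u < blockMax B σ η X 1 ω} = (box u I₀)ᶜ ∩ (box u I₁)ᶜ := by
    intro u hu0 hu1
    ext ω
    simp only [box, I₀, I₁, Set.mem_ofPred_eq, Set.mem_inter_iff, Set.mem_compl_iff, ← not_le,
      blockMax_le_iff B σ η X _ ω hu0.le, margF_le_iff_le_margQuantile (hσ _) hη hu0 hu1,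
      Finset.mem_filter, Finset.mem_univ, true_and]
  have hinter : ∀ u, box u I₀ ∩ box u I₁ = box u (I₀ ∪ I₁) := fun u => by
    ext ω
    simp only [box, Set.mem_inter_iff, Set.mem_ofPred_eq, Finset.forall_mem_union]
  have hcard : ((I₀ ∪ I₁).card : ℝ) = I₀.card + I₁.card := by
    rw [Finset.card_union_of_disjoint (Finset.disjoint_filter.2 fun i _ h₀ h₁ =>
      absurd (h₀.symm.trans h₁) (by decide)), Nat.cast_add]
  refine (((tendsto_mul_one_sub_one_sub_inv_rpow _).add
    (tendsto_mul_one_sub_one_sub_inv_rpow _)).sub (tendsto_mul_one_sub_one_sub_inv_rpow _)).congr' ?_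
  filter_upwards [eventually_gt_atTop 1] with t ht
  have hinv : 0 < 1 / t ∧ 1 / t < 1 := ⟨by positivity, (div_lt_one (by positivity)).2 ht⟩
  have hu0 : 0 < 1 - 1 / t := by linarith
  have hu1 : 1 - 1 / t < 1 := by linarith
  have hmeas : ∀ S, MeasurableSet (box (1 - 1 / t) S) :=
    fun S => measurableSet_setOf_forall_mem_le hX S _
  rw [← measureReal_def, hevent _ hu0 hu1, measureReal_compl_inter_compl (hmeas _) (hmeas _),
    hinter, hbox _ hu0 hu1, hbox _ hu0 hu1, hbox _ hu0 hu1, hcard]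
  ring

theorem statement14
    {Ω : Type*} [MeasureSpace Ω] [IsProbabilityMeasure (ℙ : Measure Ω)]
    {d : ℕ} (hd : 0 < d)
    (X : Fin d → Ω → ℝ) (hX : ∀ i, Measurable (X i))
    (σ : Fin d → ℝ) (hσ : ∀ i, 0 < σ i)
    (α η : ℝ) (hα : 0 < α) (hαη : α ≤ η) (hη1 : η ≤ 1)
    (hjoint : ∀ t : Fin d → ℝ, (∀ i, 0 < t i) →
      ℙ {ω | ∀ i, X i ω ≤ t i} =
        ENNReal.ofReal (Real.exp (-((∑ i, σ i ^ (η / α) * t i ^ (-1 / α)) ^ (α / η)))))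
    (B : Fin d → Fin 2) (hB : Function.Surjective B) :
    Tendsto (fun t : ℝ => t * (ℙ {ω | 1 - 1 / t < blockMax B σ η X 0 ω ∧
        1 - 1 / t < blockMax B σ η X 1 ω}).toReal) atTop
      (𝓝 (((Finset.univ.filter fun i => B i = 0).card : ℝ) ^ (α / η)
          + ((Finset.univ.filter fun i => B i = 1).card : ℝ) ^ (α / η)
          - (((Finset.univ.filter fun i => B i = 0).card : ℝ)
            + ((Finset.univ.filter fun i => B i = 1).card : ℝ)) ^ (α / η))) :=
  statement14_general X hX σ hσ α η hα hαη hjoint B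
end
end
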